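/- For all positive integers m and n with m ≠ n, the complete bipartite graph K_{m,n} is not edge distance-balanced. -/
import Mathlib


open SimpleGraph

/-- Distance from a vertex to an edge (as an unordered pair): the minimum of
the distances to the two endpoints. -/
noncomputable def eDist {V : Type*} (G : SimpleGraph V) (g : V) (f : Sym2 V) : ℕ :=
  Sym2.lift ⟨fun x y => min (G.dist g x) (G.dist g y), fun _ _ => min_comm _ _⟩ f

/-- The number of edges of `G` that are closer to `g` than to `h`. -/
noncomputable def mCloser {V : Type*} (G : SimpleGraph V) (g h : V) : ℕ :=
  {f ∈ G.edgeSet | eDist G g f < eDist G h f}.ncard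

/-- `G` is edge distance-balanced. -/
def EDB {V : Type*} (G : SimpleGraph V) : Prop :=
  ∀ g h : V, G.Adj g h → mCloser G g h = mCloser G h g

section aux

variable {V W : Type*} [Nonempty V] [Nonempty W] [DecidableEq V] [DecidableEq W]

set_option linter.unusedSectionVars false

lemma dist_lr (x : V) (b : W) :
    (completeBipartiteGraph V W).dist (Sum.inl x) (Sum.inr b) = 1 := by
  rw [SimpleGraph.dist_eq_one_iff_adj]; simp

lemma dist_rl (y : W) (a : V) :
    (completeBipartiteGraph V W).dist (Sum.inr y) (Sum.inl a) = 1 := by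
  rw [SimpleGraph.dist_eq_one_iff_adj]; simp

lemma reach_ll (x a : V) :
    (completeBipartiteGraph V W).Reachable (Sum.inl x) (Sum.inl a) := by
  obtain ⟨w⟩ := ‹Nonempty W›
  exact ⟨Walk.cons (by simp) (Walk.cons (by simp) Walk.nil : (completeBipartiteGraph V W).Walk (Sum.inr w) (Sum.inl a))⟩

lemma reach_rr (y b : W) :
    (completeBipartiteGraph V W).Reachable (Sum.inr y) (Sum.inr b) := by
  obtain ⟨v⟩ := ‹Nonempty V›
  exact ⟨Walk.cons (by simp) (Walk.cons (by simp) Walk.nil : (completeBipartiteGraph V W).Walk (Sum.inl v) (Sum.inr b))⟩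

lemma eDist_left (x a : V) (b : W) :
    eDist (completeBipartiteGraph V W) (Sum.inl x) s(Sum.inl a, Sum.inr b)
      = if a = x then 0 else 1 := by
  simp only [eDist, Sym2.lift_mk, dist_lr]
  split_ifs with h
  · subst h; simp
  · have h1 : (completeBipartiteGraph V W).dist (Sum.inl x) (Sum.inl a) ≠ 0 := by
      exact fun h0 => h (Sum.inl.inj ((reach_ll (W := W) x a).dist_eq_zero_iff.mp h0)).symm
    omega
  
lemma eDist_right (y : W) (a : V) (b : W) :
    eDist (completeBipartiteGraph V W) (Sum.inr y) s(Sum.inl a, Sum.inr b)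
      = if b = y then 0 else 1 := by
  simp only [eDist, Sym2.lift_mk, dist_rl]
  split_ifs with h
  · subst h; simp
  · have h1 : (completeBipartiteGraph V W).dist (Sum.inr y) (Sum.inr b) ≠ 0 := by
      exact fun h0 => h (Sum.inr.inj ((reach_rr (V := V) y b).dist_eq_zero_iff.mp h0)).symm
    omega

lemma mCloser_left [Fintype W] [DecidableEq W] (x : V) (y : W) :
    mCloser (completeBipartiteGraph V W) (Sum.inl x) (Sum.inr y) = Fintype.card W - 1 := by
  have hset : {f ∈ (completeBipartiteGraph V W).edgeSet |
      eDist (completeBipartiteGraph V W) (Sum.inl x) f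
        < eDist (completeBipartiteGraph V W) (Sum.inr y) f}
      = (fun b => s(Sum.inl x, Sum.inr b)) '' {b : W | b ≠ y} := by
    ext f
    induction f using Sym2.ind with
    | _ u v =>
      rcases u with a | b <;> rcases v with a' | b'
      · simp [Sym2.eq_iff]
      · by_cases h1 : a = x <;> by_cases h2 : b' = y <;>
          simp [eDist_left, eDist_right, Sym2.eq_iff, h1, h2] <;> aesop
      · rw [Sym2.eq_swap]
        by_cases h1 : a' = x <;> by_cases h2 : b = y <;>
          simp [eDist_left, eDist_right, Sym2.eq_iff, h1, h2] <;> aesop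
      · simp [Sym2.eq_iff]
  rw [mCloser, hset, Set.ncard_image_of_injective _ (fun b b' h => by
    simpa [Sym2.eq_iff] using h)]
  have : ({b : W | b ≠ y}) = ({y} : Set W)ᶜ := by ext b; simp
  have h2 := Set.ncard_add_ncard_compl ({y} : Set W)
  simp [Set.ncard_univ, Set.ncard_singleton] at h2
  rw [this]
  omega

lemma mCloser_right [Fintype V] [DecidableEq V] (x : V) (y : W) :
    mCloser (completeBipartiteGraph V W) (Sum.inr y) (Sum.inl x) = Fintype.card V - 1 := by
  have hset : {f ∈ (completeBipartiteGraph V W).edgeSet |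
      eDist (completeBipartiteGraph V W) (Sum.inr y) f
        < eDist (completeBipartiteGraph V W) (Sum.inl x) f}
      = (fun a => s(Sum.inl a, Sum.inr y)) '' {a : V | a ≠ x} := by
    ext f
    induction f using Sym2.ind with
    | _ u v =>
      rcases u with a | b <;> rcases v with a' | b'
      · simp [Sym2.eq_iff]
      · by_cases h1 : a = x <;> by_cases h2 : b' = y <;>
          simp [eDist_left, eDist_right, Sym2.eq_iff, h1, h2] <;> aesop
      · rw [Sym2.eq_swap]
        by_cases h1 : a' = x <;> by_cases h2 : b = y <;>
          simp [eDist_left, eDist_right, Sym2.eq_iff, h1, h2] <;> aesop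
      · simp [Sym2.eq_iff]
  rw [mCloser, hset, Set.ncard_image_of_injective _ (fun a a' h => by
    simpa [Sym2.eq_iff] using h)]
  have : ({a : V | a ≠ x}) = ({x} : Set V)ᶜ := by ext a; simp
  have h2 := Set.ncard_add_ncard_compl ({x} : Set V)
  simp [Set.ncard_univ, Set.ncard_singleton] at h2
  rw [this]
  omega

end aux

theorem completeBipartite_not_EDB (m n : ℕ) (hm : 0 < m) (hn : 0 < n) (hmn : m ≠ n) :
    ¬ EDB (completeBipartiteGraph (Fin m) (Fin n)) := by
  have : Nonempty (Fin m) := ⟨⟨0, hm⟩⟩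
  have : Nonempty (Fin n) := ⟨⟨0, hn⟩⟩
  intro hedb
  have h := hedb (Sum.inl ⟨0, hm⟩) (Sum.inr ⟨0, hn⟩) (by simp)
  rw [mCloser_left, mCloser_right] at h
  simp [Fintype.card_fin] at h
  omega
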